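/- Suppose in addition that singletons of S are measurable and that V̄ is K-Lipschitz-valued. If s₁, s₂ ∈ S satisfy φ(s₁) = φ(s₂), ξ({s₁}) > 0 and ξ({s₂}) > 0, then |V(s₁) − V(s₂)| ≤ ((L_R + γ K L_P)/(1−γ)) · (ξ({s₁})⁻¹ + ξ({s₂})⁻¹). -/

import Mathlib

/-!
Write `h s = |V s - V̄ (φ s)|`. Subtracting the two Bellman equations and comparing
`∫ V̄ ∘ φ d(P s)` with `∑ P̄(φ s)(y) V̄(y)` through total variation (only the oscillation `K` of
`V̄` matters, since both measures have mass one) gives the one-step bound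
`h s ≤ |r s - r̄ (φ s)| + γ K TV(s) + γ ∫ h d(P s)`.
Integrating against the invariant `ξ` turns `∫ (∫ h dP) dξ` back into `∫ h dξ`, so
`(1 - γ) ∫ h dξ ≤ L_R + γ K L_P`. Markov's inequality bounds `h` at an atom `s` by
`∫ h dξ / ξ{s}`, and the triangle inequality through `V̄ (φ s₁) = V̄ (φ s₂)` concludes.
-/

open MeasureTheory ProbabilityTheory

/-- Total variation distance between two measures on `X`:
the supremum over measurable sets of the absolute difference of their masses. -/
noncomputable def tvDist {X : Type*} [MeasurableSpace X] (μ ν : Measure X) : ℝ :=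
  ⨆ A : {A : Set X // MeasurableSet A}, |(μ A.1).toReal - (ν A.1).toReal|

section TotalVariation

variable {X : Type*} [MeasurableSpace X] (μ ν : Measure X)

lemma tvDist_comm : tvDist μ ν = tvDist ν μ := by
  simp only [tvDist, abs_sub_comm]

lemma tvDist_nonneg : 0 ≤ tvDist μ ν :=
  Real.iSup_nonneg fun _ => abs_nonneg _

variable [IsProbabilityMeasure μ] [IsProbabilityMeasure ν]

lemma abs_measureReal_sub_le_one (A : Set X) : |μ.real A - ν.real A| ≤ 1 :=
  abs_sub_le_of_nonneg_of_le measureReal_nonneg measureReal_le_one measureReal_nonneg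
    measureReal_le_one

lemma abs_measureReal_sub_le_tvDist {A : Set X} (hA : MeasurableSet A) :
    |μ.real A - ν.real A| ≤ tvDist μ ν :=
  le_ciSup (f := fun A : {A : Set X // MeasurableSet A} => |μ.real A - ν.real A|)
    ⟨1, Set.forall_mem_range.2 fun A => abs_measureReal_sub_le_one μ ν A⟩ ⟨A, hA⟩

lemma tvDist_le_one : tvDist μ ν ≤ 1 :=
  Real.iSup_le (fun A => abs_measureReal_sub_le_one μ ν A) zero_le_one

end TotalVariation

lemma measurable_tvDist {α X : Type*} [MeasurableSpace α] [MeasurableSpace X] [Finite X]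
    {κ η : α → Measure X} (hκ : Measurable κ) (hη : Measurable η) :
    Measurable fun a => tvDist (κ a) (η a) :=
  Measurable.iSup fun A =>
    ((Measure.measurable_coe A.2).comp hκ).ennreal_toReal.sub
      ((Measure.measurable_coe A.2).comp hη).ennreal_toReal |>.abs

section FiniteSpace

variable {Y : Type*} [Fintype Y] [MeasurableSpace Y] [DiscreteMeasurableSpace Y]
  (μ ν : Measure Y) [IsProbabilityMeasure μ] [IsProbabilityMeasure ν] {f : Y → ℝ} {K : ℝ}

lemma integral_sub_integral_le_mul_tvDist (hf : ∀ x y, f x - f y ≤ K) :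
    ∫ x, f x ∂μ - ∫ x, f x ∂ν ≤ K * tvDist μ ν := by
  classical
  have := nonempty_of_isProbabilityMeasure μ
  obtain ⟨x₀, -, hx₀⟩ := Finset.exists_min_image Finset.univ f Finset.univ_nonempty
  set A := Finset.univ.filter fun x => ν.real {x} < μ.real {x}
  have hK : 0 ≤ K := by simpa using hf x₀ x₀
  calc ∫ x, f x ∂μ - ∫ x, f x ∂ν
      = ∑ x, (μ.real {x} - ν.real {x}) * (f x - f x₀) := by
        simp only [integral_fintype Integrable.of_finite, smul_eq_mul, sub_mul, mul_sub,
          Finset.sum_sub_distrib, ← Finset.sum_mul, sum_measureReal_singleton, Finset.coe_univ,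
          probReal_univ]
        ring
    _ ≤ ∑ x ∈ A, (μ.real {x} - ν.real {x}) * K := by
        rw [Finset.sum_filter]
        refine Finset.sum_le_sum fun x _ => ?_
        have hfx : 0 ≤ f x - f x₀ ∧ f x - f x₀ ≤ K :=
          ⟨sub_nonneg.2 (hx₀ x (Finset.mem_univ x)), hf x x₀⟩
        split_ifs with hx
        · exact mul_le_mul_of_nonneg_left hfx.2 (sub_nonneg.2 hx.le)
        · exact mul_nonpos_of_nonpos_of_nonneg (sub_nonpos.2 (not_lt.1 hx)) hfx.1
    _ = K * (μ.real A - ν.real A) := by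
        rw [← Finset.sum_mul, Finset.sum_sub_distrib, sum_measureReal_singleton,
          sum_measureReal_singleton, mul_comm]
    _ ≤ K * tvDist μ ν :=
        mul_le_mul_of_nonneg_left
          ((le_abs_self _).trans (abs_measureReal_sub_le_tvDist μ ν A.measurableSet)) hK

lemma abs_integral_sub_integral_le_mul_tvDist (hf : ∀ x y, f x - f y ≤ K) :
    |∫ x, f x ∂μ - ∫ x, f x ∂ν| ≤ K * tvDist μ ν :=
  abs_sub_le_iff.2 ⟨integral_sub_integral_le_mul_tvDist μ ν hf,
    tvDist_comm μ ν ▸ integral_sub_integral_le_mul_tvDist ν μ hf⟩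

end FiniteSpace

section Invariant

variable {α : Type*} [MeasurableSpace α] {κ : Kernel α α} {μ : Measure α}

lemma ProbabilityTheory.Kernel.Invariant.comp_const_unit_apply (hκ : κ.Invariant μ) :
    (κ ∘ₖ Kernel.const Unit μ) () = μ := by
  rw [← Measure.comp_eq_comp_const_apply]
  exact hκ.def

variable {f : α → ℝ}

lemma ProbabilityTheory.Kernel.Invariant.integrable_integral (hκ : κ.Invariant μ)
    (hf : Integrable f μ) : Integrable (fun a => ∫ b, f b ∂κ a) μ := by
  rw [← hκ.comp_const_unit_apply] at hf
  simpa using hf.integral_comp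

lemma ProbabilityTheory.Kernel.Invariant.integral_integral (hκ : κ.Invariant μ)
    (hf : Integrable f μ) : ∫ a, ∫ b, f b ∂κ a ∂μ = ∫ a, f a ∂μ := by
  rw [← hκ.comp_const_unit_apply] at hf
  conv_rhs => rw [← hκ.comp_const_unit_apply]
  rw [Kernel.integral_comp hf, Kernel.const_apply]

end Invariant

lemma mul_measureReal_singleton_le_integral {α : Type*} [MeasurableSpace α] {μ : Measure α}
    [IsFiniteMeasure μ] {f : α → ℝ} (hf0 : 0 ≤ f) (hf : Integrable f μ) (a : α) :
    f a * μ.real {a} ≤ ∫ x, f x ∂μ :=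
  calc f a * μ.real {a} ≤ f a * μ.real {x | f a ≤ f x} :=
        mul_le_mul_of_nonneg_left (measureReal_mono (by simp)) (hf0 a)
    _ ≤ ∫ x, f x ∂μ := mul_meas_ge_le_integral_of_nonneg (ae_of_all _ hf0) hf _

section Abstraction

variable {S Sb : Type*} [MeasurableSpace S] [Fintype Sb] [MeasurableSpace Sb]
  [DiscreteMeasurableSpace Sb] {φ : S → Sb}

lemma integrable_comp_of_finite (hφ : Measurable φ)
    (μ : Measure S) [IsFiniteMeasure μ] (g : Sb → ℝ) : Integrable (fun s => g (φ s)) μ :=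
  (integrable_map_measure Measurable.of_discrete.aestronglyMeasurable hφ.aemeasurable).1
    Integrable.of_finite

lemma integrable_abs_sub_comp_of_bounded (hφ : Measurable φ) {f : S → ℝ} (hf : Measurable f)
    (hbdd : ∃ C, ∀ s, |f s| ≤ C) (g : Sb → ℝ) (μ : Measure S) [IsFiniteMeasure μ] :
    Integrable (fun s => |f s - g (φ s)|) μ :=
  have ⟨C, hC⟩ := hbdd
  ((Integrable.of_bound hf.aestronglyMeasurable C (ae_of_all μ hC)).sub
    (integrable_comp_of_finite hφ μ g)).abs

lemma abs_integral_sub_sum_le {V : S → ℝ} {Vb : Sb → ℝ} {K : ℝ} (hφ : Measurable φ)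
    (μ : Measure S) [IsProbabilityMeasure μ] (ν : PMF Sb) (hV : Integrable V μ)
    (hK : ∀ x y, Vb x - Vb y ≤ K) :
    |∫ s, V s ∂μ - ∑ y, (ν y).toReal * Vb y| ≤
      ∫ s, |V s - Vb (φ s)| ∂μ + K * tvDist (μ.map φ) ν.toMeasure := by
  have := Measure.isProbabilityMeasure_map (μ := μ) hφ.aemeasurable
  have hsplit : ∫ s, V s ∂μ - ∑ y, (ν y).toReal * Vb y =
      ∫ s, (V s - Vb (φ s)) ∂μ + (∫ x, Vb x ∂μ.map φ - ∫ x, Vb x ∂ν.toMeasure) := by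
    rw [integral_sub hV (integrable_comp_of_finite hφ μ Vb),
      integral_map hφ.aemeasurable Measurable.of_discrete.aestronglyMeasurable,
      PMF.integral_eq_sum]
    simp only [smul_eq_mul]
    ring
  rw [hsplit]
  exact (abs_add_le _ _).trans
    (add_le_add abs_integral_le_integral_abs (abs_integral_sub_integral_le_mul_tvDist _ _ hK))

variable {V : S → ℝ} {Vb : Sb → ℝ} {r : S → ℝ} {rb : Sb → ℝ} {γ K : ℝ}

lemma abs_sub_le_of_bellman (hφ : Measurable φ) (μ : Measure S) [IsProbabilityMeasure μ]
    (ν : PMF Sb) (hγ0 : 0 ≤ γ) (hV : Integrable V μ) (hK : ∀ x y, Vb x - Vb y ≤ K) {s : S}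
    (hVs : V s = r s + γ * ∫ s', V s' ∂μ)
    (hVbs : Vb (φ s) = rb (φ s) + γ * ∑ y, (ν y).toReal * Vb y) :
    |V s - Vb (φ s)| ≤
      |r s - rb (φ s)| + γ * K * tvDist (μ.map φ) ν.toMeasure + γ * ∫ s', |V s' - Vb (φ s')| ∂μ :=
  calc |V s - Vb (φ s)|
      = |(r s - rb (φ s)) + γ * (∫ s', V s' ∂μ - ∑ y, (ν y).toReal * Vb y)| := by
        rw [hVs, hVbs]; ring_nf
    _ ≤ |r s - rb (φ s)| + |γ| * |∫ s', V s' ∂μ - ∑ y, (ν y).toReal * Vb y| :=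
        (abs_add_le _ _).trans_eq (by rw [abs_mul])
    _ ≤ |r s - rb (φ s)| +
          γ * (∫ s', |V s' - Vb (φ s')| ∂μ + K * tvDist (μ.map φ) ν.toMeasure) := by
        rw [abs_of_nonneg hγ0]
        gcongr
        exact abs_integral_sub_sum_le hφ μ ν hV hK
    _ = _ := by ring

lemma integrable_tvDist_map (P : Kernel S S) [IsMarkovKernel P] (Pb : Sb → PMF Sb)
    (hφ : Measurable φ) (ξ : Measure S) [IsFiniteMeasure ξ] :
    Integrable (fun s => tvDist ((P s).map φ) ((Pb (φ s)).toMeasure)) ξ := by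
  refine .of_bound (measurable_tvDist ?_ ?_).aestronglyMeasurable 1 (ae_of_all _ fun s => ?_)
  · simpa only [← Kernel.map_apply _ hφ] using (P.map φ).measurable
  · exact (Measurable.of_discrete (f := fun x : Sb => (Pb x).toMeasure)).comp hφ
  · have := Measure.isProbabilityMeasure_map (μ := P s) hφ.aemeasurable
    exact abs_le.2 ⟨by linarith [tvDist_nonneg ((P s).map φ) (Pb (φ s)).toMeasure],
      tvDist_le_one _ _⟩

lemma integral_abs_sub_le_of_bellman (P : Kernel S S) [IsMarkovKernel P] (Pb : Sb → PMF Sb)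
    (hφ : Measurable φ) (ξ : Measure S) [IsProbabilityMeasure ξ] (hξ : P.Invariant ξ)
    (hγ0 : 0 ≤ γ) (hγ1 : γ < 1) (hr : Integrable (fun s => |r s - rb (φ s)|) ξ)
    (hVmeas : Measurable V) (hVbdd : ∃ C, ∀ s, |V s| ≤ C)
    (hVbellman : ∀ s, V s = r s + γ * ∫ s', V s' ∂(P s))
    (hVbbellman : ∀ x, Vb x = rb x + γ * ∑ y, ((Pb x) y).toReal * Vb y)
    (hK : ∀ x y, Vb x - Vb y ≤ K) :
    ∫ s, |V s - Vb (φ s)| ∂ξ ≤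
      ((∫ s, |r s - rb (φ s)| ∂ξ) +
          γ * K * (∫ s, tvDist ((P s).map φ) ((Pb (φ s)).toMeasure) ∂ξ)) / (1 - γ) := by
  set h := fun s => |V s - Vb (φ s)|
  set tv := fun s => tvDist ((P s).map φ) ((Pb (φ s)).toMeasure)
  obtain ⟨C, hC⟩ := hVbdd
  have hh : Integrable h ξ := integrable_abs_sub_comp_of_bounded hφ hVmeas ⟨C, hC⟩ Vb ξ
  have htv : Integrable tv ξ := integrable_tvDist_map P Pb hφ ξ
  have hstep : ∀ s, h s ≤ |r s - rb (φ s)| + γ * K * tv s + γ * ∫ s', h s' ∂(P s) := fun s =>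
    abs_sub_le_of_bellman hφ (P s) (Pb (φ s)) hγ0
      (.of_bound hVmeas.aestronglyMeasurable C (ae_of_all _ hC)) hK (hVbellman s)
      (hVbbellman (φ s))
  have hR : Integrable (fun s => |r s - rb (φ s)| + γ * K * tv s) ξ := hr.add (htv.const_mul _)
  have hPh : Integrable (fun s => γ * ∫ s', h s' ∂(P s)) ξ :=
    (hξ.integrable_integral hh).const_mul γ
  have hRHS : Integrable
      (fun s => |r s - rb (φ s)| + γ * K * tv s + γ * ∫ s', h s' ∂(P s)) ξ := hR.add hPh
  have hmono := integral_mono hh hRHS hstep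
  rw [integral_add hR hPh, integral_add hr (htv.const_mul _), integral_const_mul,
    integral_const_mul, hξ.integral_integral hh] at hmono
  rw [le_div_iff₀ (sub_pos.2 hγ1)]
  linarith

end Abstraction

theorem value_closeness_return_general
    {S : Type*} [MeasurableSpace S]
    {Sb : Type*} [Fintype Sb] [MeasurableSpace Sb] [DiscreteMeasurableSpace Sb]
    (P : Kernel S S) [IsMarkovKernel P]
    (Pb : Sb → PMF Sb)
    (φ : S → Sb) (hφ : Measurable φ)
    (ξ : Measure S) [IsProbabilityMeasure ξ]
    (hinv : ∀ A : Set S, MeasurableSet A → ξ A = ∫⁻ s, P s A ∂ξ)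
    (γ : ℝ) (hγ0 : 0 ≤ γ) (hγ1 : γ < 1)
    (r : S → ℝ) (hrmeas : Measurable r) (hrbdd : ∃ C, ∀ s, |r s| ≤ C)
    (rb : Sb → ℝ)
    (V : S → ℝ) (hVmeas : Measurable V) (hVbdd : ∃ C, ∀ s, |V s| ≤ C)
    (hVbellman : ∀ s, V s = r s + γ * ∫ s', V s' ∂(P s))
    (Vb : Sb → ℝ)
    (hVbbellman : ∀ x, Vb x = rb x + γ * ∑ y, ((Pb x) y).toReal * Vb y)
    (K : ℝ) (hK : ∀ x y, |Vb x - Vb y| ≤ K)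
    (s₁ s₂ : S) (hφeq : φ s₁ = φ s₂)
    (hs₁ : 0 < ξ {s₁}) (hs₂ : 0 < ξ {s₂}) :
    |V s₁ - V s₂| ≤
      (((∫ s, |r s - rb (φ s)| ∂ξ) +
          γ * K * (∫ s, tvDist ((P s).map φ) ((Pb (φ s)).toMeasure) ∂ξ)) / (1 - γ)) *
        ((ξ {s₁}).toReal⁻¹ + (ξ {s₂}).toReal⁻¹) := by
  have hξ : P.Invariant ξ := Measure.ext fun A hA =>
    (Measure.bind_apply hA P.aemeasurable).trans (hinv A hA).symm
  have hmean := integral_abs_sub_le_of_bellman P Pb hφ ξ hξ hγ0 hγ1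
    (integrable_abs_sub_comp_of_bounded hφ hrmeas hrbdd rb ξ) hVmeas hVbdd hVbellman hVbbellman
    fun x y => (le_abs_self _).trans (hK x y)
  set h := fun s => |V s - Vb (φ s)|
  have hatom : ∀ s, 0 < ξ {s} → h s ≤ (∫ s', h s' ∂ξ) * (ξ {s}).toReal⁻¹ := fun s hs => by
    rw [← div_eq_mul_inv, le_div_iff₀ (ENNReal.toReal_pos hs.ne' (measure_ne_top _ _))]
    exact mul_measureReal_singleton_le_integral (fun _ => abs_nonneg _)
      (integrable_abs_sub_comp_of_bounded hφ hVmeas hVbdd Vb ξ) s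
  calc |V s₁ - V s₂| ≤ h s₁ + h s₂ := by
        simp only [h]
        rw [hφeq, abs_sub_comm (V s₂)]
        exact abs_sub_le _ _ _
    _ ≤ (∫ s, h s ∂ξ) * (ξ {s₁}).toReal⁻¹ + (∫ s, h s ∂ξ) * (ξ {s₂}).toReal⁻¹ :=
        add_le_add (hatom s₁ hs₁) (hatom s₂ hs₂)
    _ = (∫ s, h s ∂ξ) * ((ξ {s₁}).toReal⁻¹ + (ξ {s₂}).toReal⁻¹) := (mul_add _ _ _).symm
    _ ≤ _ := by gcongr

/-- Abstraction-quality bound for discounted return: if the latent value function `Vb` is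
`K`-Lipschitz-valued, two states with the same embedding and positive stationary mass have
discounted-return values within `((L_R + γ·K·L_P)/(1-γ))·(ξ{s₁}⁻¹ + ξ{s₂}⁻¹)` of each other. -/
theorem value_closeness_return
    {S : Type*} [MeasurableSpace S] [MeasurableSingletonClass S]
    {Sb : Type*} [Fintype Sb] [Nonempty Sb] [MeasurableSpace Sb] [DiscreteMeasurableSpace Sb]
    (P : Kernel S S) [IsMarkovKernel P]
    (Pb : Sb → PMF Sb)
    (φ : S → Sb) (hφ : Measurable φ)
    (ξ : Measure S) [IsProbabilityMeasure ξ]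
    (hinv : ∀ A : Set S, MeasurableSet A → ξ A = ∫⁻ s, P s A ∂ξ)
    (γ : ℝ) (hγ0 : 0 ≤ γ) (hγ1 : γ < 1)
    (r : S → ℝ) (hrmeas : Measurable r) (hrbdd : ∃ C, ∀ s, |r s| ≤ C)
    (rb : Sb → ℝ)
    (V : S → ℝ) (hVmeas : Measurable V) (hVbdd : ∃ C, ∀ s, |V s| ≤ C)
    (hVbellman : ∀ s, V s = r s + γ * ∫ s', V s' ∂(P s))
    (Vb : Sb → ℝ)
    (hVbbellman : ∀ x, Vb x = rb x + γ * ∑ y, ((Pb x) y).toReal * Vb y)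
    (K : ℝ) (hK : ∀ x y, |Vb x - Vb y| ≤ K)
    (s₁ s₂ : S) (hφeq : φ s₁ = φ s₂)
    (hs₁ : 0 < ξ {s₁}) (hs₂ : 0 < ξ {s₂}) :
    |V s₁ - V s₂| ≤
      (((∫ s, |r s - rb (φ s)| ∂ξ) +
          γ * K * (∫ s, tvDist ((P s).map φ) ((Pb (φ s)).toMeasure) ∂ξ)) / (1 - γ)) *
        ((ξ {s₁}).toReal⁻¹ + (ξ {s₂}).toReal⁻¹) :=
  value_closeness_return_general P Pb φ hφ ξ hinv γ hγ0 hγ1 r hrmeas hrbdd rb V hVmeas hVbdd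
    hVbellman Vb hVbbellman K hK s₁ s₂ hφeq hs₁ hs₂
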